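/- Let G1 and G2 be disjoint Eulerian multigraphs with edges e1 = u1v1 ∈ E(G1) and e2 = u2v2 ∈ E(G2). Let G be the vertex-edge-identification: identify v1 with v2, delete e1 and e2, and add a new edge u1u2. Then c(G) = c(G1) + c(G2) − 1 and ν(G) = ν(G1) + ν(G2) − 1. -/

import Mathlib

open scoped Classical

/-- A finite multigraph without loops: a vertex type, an edge type, and an
incidence map assigning to each edge an unordered pair of distinct vertices. -/
structure MGraph where
  V : Type
  E : Type
  finV : Finite V
  finE : Finite E
  ends : E → Sym2 V
  noLoop : ∀ e, ¬ (ends e).IsDiag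

namespace MGraph

variable (G : MGraph)

/-- Degree of a vertex counting only edges in the edge set `F`. -/
noncomputable def degOn (F : Set G.E) (v : G.V) : ℕ := {e | e ∈ F ∧ v ∈ G.ends e}.ncard

/-- Degree of a vertex. -/
noncomputable def deg (v : G.V) : ℕ := G.degOn Set.univ v

/-- Adjacency using only edges from `F`. -/
def AdjOn (F : Set G.E) (a b : G.V) : Prop := ∃ e ∈ F, G.ends e = s(a, b)

/-- Reachability using only edges from `F`. -/
def ReachOn (F : Set G.E) : G.V → G.V → Prop := Relation.ReflTransGen (G.AdjOn F)

/-- Connectivity of a multigraph. -/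
def Connected : Prop := Nonempty G.V ∧ ∀ a b : G.V, G.ReachOn Set.univ a b

/-- A set of edges forms a cycle: it is nonempty, every vertex has degree 0 or 2
in it, and any two of its endpoints are joined by a path inside it. -/
def IsCycle (C : Set G.E) : Prop :=
  C.Nonempty ∧ (∀ v, G.degOn C v = 0 ∨ G.degOn C v = 2) ∧
    ∀ e ∈ C, ∀ f ∈ C, ∀ a b : G.V, a ∈ G.ends e → b ∈ G.ends f → G.ReachOn C a b

/-- A cycle decomposition of the edge set `F`: a set of cycles inside `F` such
that every edge of `F` lies in exactly one of them. -/
def IsCycleDecompOn (F : Set G.E) (D : Set (Set G.E)) : Prop :=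
  (∀ C ∈ D, G.IsCycle C ∧ C ⊆ F) ∧ ∀ e ∈ F, ∃! C, C ∈ D ∧ e ∈ C

/-- A cycle decomposition of the graph. -/
def IsCycleDecomp (D : Set (Set G.E)) : Prop := G.IsCycleDecompOn Set.univ D

/-- Minimum number of cycles in a cycle decomposition of `F`. -/
noncomputable def cOn (F : Set G.E) : ℕ :=
  sInf {n | ∃ D, G.IsCycleDecompOn F D ∧ D.ncard = n}

/-- Maximum number of cycles in a cycle decomposition of `F`. -/
noncomputable def nuOn (F : Set G.E) : ℕ :=
  sSup {n | ∃ D, G.IsCycleDecompOn F D ∧ D.ncard = n}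

/-- Minimum cycle number. -/
noncomputable def c : ℕ := G.cOn Set.univ

/-- Maximum cycle number. -/
noncomputable def nu : ℕ := G.nuOn Set.univ

/-- A multigraph is Eulerian if it admits a closed walk traversing every edge
exactly once. -/
def IsEulerian : Prop :=
  ∃ (vs : List G.V) (es : List G.E),
    vs.length = es.length + 1 ∧
    (∀ (i : ℕ) (e : G.E) (a b : G.V), es[i]? = some e → vs[i]? = some a →
      vs[i + 1]? = some b → G.ends e = s(a, b)) ∧
    vs.head? = vs.getLast? ∧ es.Nodup ∧ ∀ e : G.E, e ∈ es

/-- A cut-edge (bridge): its endpoints are disconnected after its removal. -/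
def IsBridge (e : G.E) : Prop :=
  ∃ a b, G.ends e = s(a, b) ∧ ¬ G.ReachOn {e}ᶜ a b

/-- 2-edge-connectivity: connected and without cut-edges. -/
def TwoEdgeConnected : Prop := G.Connected ∧ ∀ e, ¬ G.IsBridge e

/-- Reachability avoiding a vertex. -/
def ReachAvoid (v : G.V) (a b : G.V) : Prop :=
  Relation.ReflTransGen (fun x y => x ≠ v ∧ y ≠ v ∧ G.AdjOn Set.univ x y) a b

/-- A cut-vertex: two vertices in the same component get separated by its removal. -/
def IsCutVertex (v : G.V) : Prop :=
  ∃ a b, a ≠ v ∧ b ≠ v ∧ G.ReachOn Set.univ a b ∧ ¬ G.ReachAvoid v a b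

/-- Biconnected: connected, at least two vertices, and without cut-vertices. -/
def Biconnected : Prop :=
  G.Connected ∧ 2 ≤ Nat.card G.V ∧ ∀ v, ¬ G.IsCutVertex v

/-- The vertices covered by a set of edges. -/
def VertexSetOf (C : Set G.E) : Set G.V := {v | ∃ e ∈ C, v ∈ G.ends e}

/-- No two edge-disjoint cycles share more than two vertices. -/
def NoTwoCyclesShareThree : Prop :=
  ∀ C1 C2 : Set G.E, G.IsCycle C1 → G.IsCycle C2 → Disjoint C1 C2 →
    (G.VertexSetOf C1 ∩ G.VertexSetOf C2).ncard ≤ 2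

/-- An Eulerian multiedge: two vertices joined by an even positive number of
parallel edges. -/
def IsEulerianMultiedge : Prop :=
  Nat.card G.V = 2 ∧ 0 < Nat.card G.E ∧ Even (Nat.card G.E)

end MGraph

/-- Isomorphism of multigraphs. -/
structure MIso (G H : MGraph) where
  vEquiv : G.V ≃ H.V
  eEquiv : G.E ≃ H.E
  ends_eq : ∀ e, H.ends (eEquiv e) = (G.ends e).map vEquiv

namespace MGraph

/-- Vertex-identification: glue `u1 ∈ V(G1)` with `u2 ∈ V(G2)`. -/
noncomputable def vertexIdent (G1 G2 : MGraph) (u1 : G1.V) (u2 : G2.V) : MGraph where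
  V := G1.V ⊕ {v : G2.V // v ≠ u2}
  E := G1.E ⊕ G2.E
  finV := by have := G1.finV; have := G2.finV; infer_instance
  finE := by have := G1.finE; have := G2.finE; infer_instance
  ends := fun e =>
    match e with
    | Sum.inl e => (G1.ends e).map Sum.inl
    | Sum.inr e => (G2.ends e).map
        (fun v => if h : v = u2 then Sum.inl u1 else Sum.inr ⟨v, h⟩)
  noLoop := by
    rintro (e | e) h
    · exact G1.noLoop e ((Sym2.isDiag_map Sum.inl_injective).mp h)
    · refine G2.noLoop e ((Sym2.isDiag_map ?_).mp h)
      intro a b hab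
      by_cases ha : a = u2 <;> by_cases hb : b = u2 <;>
        simp [ha, hb] at hab ⊢ <;> simp_all

/-- Edge-identification: delete `e1` and `e2` (with endpoints `u1, v1` resp.
`u2, v2`) and add the new edges `u1u2` and `v1v2`. -/
def edgeIdent (G1 G2 : MGraph) (e1 : G1.E) (e2 : G2.E)
    (u1 v1 : G1.V) (u2 v2 : G2.V) : MGraph where
  V := G1.V ⊕ G2.V
  E := {e : G1.E // e ≠ e1} ⊕ {e : G2.E // e ≠ e2} ⊕ Bool
  finV := by have := G1.finV; have := G2.finV; infer_instance
  finE := by have := G1.finE; have := G2.finE; infer_instance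
  ends := fun e =>
    match e with
    | Sum.inl e => (G1.ends e.1).map Sum.inl
    | Sum.inr (Sum.inl e) => (G2.ends e.1).map Sum.inr
    | Sum.inr (Sum.inr true) => s(Sum.inl u1, Sum.inr u2)
    | Sum.inr (Sum.inr false) => s(Sum.inl v1, Sum.inr v2)
  noLoop := by
    rintro (e | e | b) h
    · exact G1.noLoop e.1 ((Sym2.isDiag_map Sum.inl_injective).mp h)
    · exact G2.noLoop e.1 ((Sym2.isDiag_map Sum.inr_injective).mp h)
    · cases b <;> simp [Sym2.mk_isDiag_iff] at h

/-- Vertex-edge-identification: identify `v1` with `v2`, delete `e1 = u1v1`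
and `e2 = u2v2`, and add a new edge `u1u2`. -/
noncomputable def vertexEdgeIdent (G1 G2 : MGraph) (e1 : G1.E) (e2 : G2.E)
    (u1 v1 : G1.V) (u2 v2 : G2.V) (h2 : G2.ends e2 = s(u2, v2)) : MGraph where
  V := G1.V ⊕ {w : G2.V // w ≠ v2}
  E := {e : G1.E // e ≠ e1} ⊕ {e : G2.E // e ≠ e2} ⊕ Unit
  finV := by have := G1.finV; have := G2.finV; infer_instance
  finE := by have := G1.finE; have := G2.finE; infer_instance
  ends := fun e =>
    match e with
    | Sum.inl e => (G1.ends e.1).map Sum.inl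
    | Sum.inr (Sum.inl e) => (G2.ends e.1).map
        (fun w => if h : w = v2 then Sum.inl v1 else Sum.inr ⟨w, h⟩)
    | Sum.inr (Sum.inr _) =>
        s(Sum.inl u1, Sum.inr ⟨u2, fun h =>
          G2.noLoop e2 (by rw [h2, h]; exact Sym2.mk_isDiag_iff.mpr rfl)⟩)
  noLoop := by
    rintro (e | e | u) h
    · exact G1.noLoop e.1 ((Sym2.isDiag_map Sum.inl_injective).mp h)
    · refine G2.noLoop e.1 ((Sym2.isDiag_map ?_).mp h)
      intro a b hab
      by_cases ha : a = v2 <;> by_cases hb : b = v2 <;>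
        simp [ha, hb] at hab ⊢ <;> simp_all
    · simp [Sym2.mk_isDiag_iff] at h

/-- Delete an edge from a multigraph. -/
def deleteEdge (G : MGraph) (e : G.E) : MGraph where
  V := G.V
  E := {f : G.E // f ≠ e}
  finV := G.finV
  finE := by have := G.finE; infer_instance
  ends := fun f => G.ends f.1
  noLoop := fun f => G.noLoop f.1

/-- `Sym2.pmap`-style map into a subtype. -/
noncomputable def sym2Pmap {α β : Type} {p : α → Prop} (f : ∀ a, p a → β)
    (s : Sym2 α) (h : ∀ a ∈ s, p a) : Sym2 β :=
  let z := Classical.choose (Quot.exists_rep s)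
  s(f z.1 (h z.1 (by
      have hz : Quot.mk _ z = s := Classical.choose_spec (Quot.exists_rep s)
      rw [← hz]; exact Sym2.mem_mk_left z.1 z.2)),
    f z.2 (h z.2 (by
      have hz : Quot.mk _ z = s := Classical.choose_spec (Quot.exists_rep s)
      rw [← hz]; exact Sym2.mem_mk_right z.1 z.2)))

/-- Delete a vertex (and all incident edges) from a multigraph. -/
noncomputable def deleteVertex (G : MGraph) (v : G.V) : MGraph where
  V := {w : G.V // w ≠ v}
  E := {e : G.E // v ∉ G.ends e}
  finV := by have := G.finV; infer_instance
  finE := by have := G.finE; infer_instance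
  ends := fun e => sym2Pmap (fun a ha => (⟨a, ha⟩ : {w : G.V // w ≠ v}))
    (G.ends e.1) (fun a ha hav => e.2 (hav ▸ ha))
  noLoop := by
    rintro ⟨e, he⟩ h
    apply G.noLoop e
    unfold sym2Pmap at h
    have hz : Quot.mk _ (Classical.choose (Quot.exists_rep (G.ends e))) = G.ends e :=
      Classical.choose_spec (Quot.exists_rep (G.ends e))
    rw [Sym2.mk_isDiag_iff] at h
    have : (Classical.choose (Quot.exists_rep (G.ends e))).1 =
        (Classical.choose (Quot.exists_rep (G.ends e))).2 := congrArg Subtype.val h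
    rw [← hz]
    exact Sym2.mk_isDiag_iff.mpr this

end MGraph

/-- A tree decomposition of a multigraph: a tree of bags covering all vertices
and edges such that the bags containing a given vertex form a subtree. -/
structure TreeDecomp (G : MGraph) where
  ι : Type
  t : SimpleGraph ι
  isTree : t.IsTree
  bag : ι → Set G.V
  covers_vertex : ∀ v : G.V, ∃ i, v ∈ bag i
  covers_edge : ∀ e : G.E, ∃ i, ∀ v ∈ G.ends e, v ∈ bag i
  bags_connected : ∀ v : G.V, (SimpleGraph.induce {i | v ∈ bag i} t).Connected

namespace MGraph

/-- The graph has treewidth at most `k`. -/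
def twLE (G : MGraph) (k : ℕ) : Prop :=
  ∃ T : TreeDecomp G, ∀ i, (T.bag i).ncard ≤ k + 1

/-- Treewidth of a multigraph. -/
noncomputable def treewidth (G : MGraph) : ℕ := sInf {k | G.twLE k}

/-- The closed necklace on `n ≥ 2` vertices: a cycle of length `n` with all
of its edges doubled. -/
def necklace (n : ℕ) (hn : 2 ≤ n) : MGraph where
  V := ZMod n
  E := ZMod n × Bool
  finV := by have : NeZero n := ⟨by omega⟩; infer_instance
  finE := by have : NeZero n := ⟨by omega⟩; infer_instance
  ends := fun e => s(e.1, e.1 + 1)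
  noLoop := by
    have : Fact (1 < n) := ⟨hn⟩
    intro e h
    rw [Sym2.mk_isDiag_iff] at h
    exact one_ne_zero (left_eq_add.mp h)

end MGraph

/-!
Write `G` for the vertex-edge-identification and `ε = u1u2` for its new edge. Removing `ε`, the
vertex `v1 = v2` separates the `G1` side from the `G2` side. Every vertex has even degree in a
cycle, so a cycle of `G` avoiding `ε` meets `v1 = v2` with even degree on each side, hence with
degree zero on one side, and is therefore a cycle of `G1 - e1` or of `G2 - e2`. A cycle through
`ε` meets `v1 = v2` with degree one on each side (the only other odd vertices being `u1` and
`u2`); cutting it there and closing the two halves with `e1` and `e2` gives cycles of `G1` and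
`G2`. Conversely, the cycles of `G1` and `G2` through `e1` and `e2` merge into one cycle through
`ε`. Hence a decomposition of `G` into `k` cycles yields decompositions of `G1` and `G2` into
`k + 1` cycles in total, and vice versa, which shifts both the minimum and the maximum by one.
-/

open scoped Pointwise in
lemma sInf_add_one_and_sSup_add_one {S T₁ T₂ : Set ℕ} (h₁ : T₁.Nonempty) (h₂ : T₂.Nonempty)
    (hb₁ : BddAbove T₁) (hb₂ : BddAbove T₂) (h : (· + 1) '' S = T₁ + T₂) :
    sInf S + 1 = sInf T₁ + sInf T₂ ∧ sSup S + 1 = sSup T₁ + sSup T₂ := by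
  have hfwd : ∀ a ∈ T₁, ∀ b ∈ T₂, ∃ n ∈ S, n + 1 = a + b := fun a ha b hb => by
    obtain ⟨n, hn, hab⟩ := h.symm ▸ Set.add_mem_add ha hb
    exact ⟨n, hn, hab⟩
  have hbwd : ∀ n ∈ S, ∃ a ∈ T₁, ∃ b ∈ T₂, a + b = n + 1 := fun n hn => by
    obtain ⟨a, ha, b, hb, hab⟩ := h ▸ Set.mem_image_of_mem (· + 1) hn
    exact ⟨a, ha, b, hb, hab⟩
  obtain ⟨n₀, hn₀, -⟩ := hfwd _ h₁.some_mem _ h₂.some_mem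
  have hS : S.Nonempty := ⟨n₀, hn₀⟩
  have hbS : BddAbove S := ⟨sSup T₁ + sSup T₂, fun n hn => by
    obtain ⟨a, ha, b, hb, hab⟩ := hbwd n hn
    have := le_csSup hb₁ ha
    have := le_csSup hb₂ hb
    omega⟩
  constructor
  · obtain ⟨n, hn, hn'⟩ := hfwd _ (Nat.sInf_mem h₁) _ (Nat.sInf_mem h₂)
    obtain ⟨a, ha, b, hb, hab⟩ := hbwd _ (Nat.sInf_mem hS)
    have := Nat.sInf_le hn
    have := Nat.sInf_le ha
    have := Nat.sInf_le hb
    omega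
  · obtain ⟨n, hn, hn'⟩ := hfwd _ (Nat.sSup_mem h₁ hb₁) _ (Nat.sSup_mem h₂ hb₂)
    obtain ⟨a, ha, b, hb, hab⟩ := hbwd _ (Nat.sSup_mem hS hbS)
    have := le_csSup hbS hn
    have := le_csSup hb₁ ha
    have := le_csSup hb₂ hb
    omega

namespace MGraph

instance (G : MGraph) : Finite G.V := G.finV
instance (G : MGraph) : Finite G.E := G.finE

variable {G : MGraph}

lemma ne_of_ends_eq {e : G.E} {a b : G.V} (h : G.ends e = s(a, b)) : a ≠ b := by
  rintro rfl
  exact G.noLoop e (h ▸ Sym2.mk_isDiag_iff.mpr rfl)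

lemma exists_ends_eq (e : G.E) : ∃ a b, G.ends e = s(a, b) :=
  ⟨_, _, (Quot.exists_rep (G.ends e)).choose_spec.symm⟩

lemma ite_mem_ends {e : G.E} {a b : G.V} (h : G.ends e = s(a, b)) (v : G.V) :
    (if v ∈ G.ends e then 1 else 0) = (if v = a then 1 else 0) + (if v = b then 1 else 0) := by
  have hab := ne_of_ends_eq h
  by_cases hva : v = a <;> by_cases hvb : v = b <;> simp_all [Sym2.mem_iff]

lemma ite_mem_ends_of_ne {e : G.E} {a b v : G.V} (h : G.ends e = s(a, b)) (hv : v ≠ b) :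
    (if v ∈ G.ends e then 1 else 0) = if v = a then 1 else 0 := by
  rw [ite_mem_ends h, if_neg hv, add_zero]

section Degree

lemma degOn_eq_zero_iff {F : Set G.E} {v : G.V} :
    G.degOn F v = 0 ↔ ∀ e ∈ F, v ∉ G.ends e := by
  simp [degOn, Set.ncard_eq_zero (Set.toFinite _), Set.eq_empty_iff_forall_notMem]

lemma degOn_union {F F' : Set G.E} (h : Disjoint F F') (v : G.V) :
    G.degOn (F ∪ F') v = G.degOn F v + G.degOn F' v := by
  rw [degOn, degOn, degOn, ← Set.ncard_union_eq (h.mono (fun _ h => h.1) (fun _ h => h.1))]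
  congr 1
  ext e
  simp only [Set.mem_union, Set.mem_ofPred_eq]
  tauto

lemma degOn_singleton (e : G.E) (v : G.V) :
    G.degOn {e} v = if v ∈ G.ends e then 1 else 0 := by
  split_ifs with hv
  · rw [degOn, ← Set.ncard_singleton e]
    congr 1
    ext x
    simp only [Set.mem_singleton_iff, Set.mem_ofPred_eq, and_iff_left_iff_imp]
    rintro rfl
    exact hv
  · exact degOn_eq_zero_iff.mpr (by simpa using hv)

lemma degOn_insert {F : Set G.E} {e : G.E} (he : e ∉ F) (v : G.V) :
    G.degOn (insert e F) v = G.degOn F v + if v ∈ G.ends e then 1 else 0 := by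
  rw [Set.insert_eq, degOn_union (Set.disjoint_singleton_left.mpr he), degOn_singleton, add_comm]

end Degree

section Reach

lemma AdjOn.symm {F : Set G.E} {a b : G.V} (h : G.AdjOn F a b) : G.AdjOn F b a :=
  let ⟨e, he, hab⟩ := h
  ⟨e, he, hab.trans Sym2.eq_swap⟩

lemma ReachOn.symm {F : Set G.E} {a b : G.V} (h : G.ReachOn F a b) : G.ReachOn F b a := by
  induction h with
  | refl => exact .refl
  | tail _ hadj ih => exact ih.head hadj.symm

lemma ReachOn.mono {F F' : Set G.E} (hF : F ⊆ F') {a b : G.V} (h : G.ReachOn F a b) :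
    G.ReachOn F' a b :=
  Relation.ReflTransGen.mono (fun _ _ ⟨e, he, hab⟩ => ⟨e, hF he, hab⟩) _ _ h

lemma ReachOn.of_ends_eq {F : Set G.E} {e : G.E} {a b : G.V} (he : e ∈ F)
    (h : G.ends e = s(a, b)) : G.ReachOn F a b :=
  .single ⟨e, he, h⟩

lemma ReachOn.map {H : MGraph} {F : Set G.E} {T : Set H.E} (f : G.V → H.V)
    (hf : ∀ e ∈ F, ∀ a b, G.ends e = s(a, b) → H.ReachOn T (f a) (f b)) {a b : G.V}
    (h : G.ReachOn F a b) : H.ReachOn T (f a) (f b) :=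
  h.lift' f fun _ _ ⟨e, he, hab⟩ => hf e he _ _ hab

lemma ReachOn.mem_of_closed {F : Set G.E} {K : Set G.V}
    (hK : ∀ e ∈ F, ∀ a b, G.ends e = s(a, b) → a ∈ K → b ∈ K) {a b : G.V}
    (h : G.ReachOn F a b) (ha : a ∈ K) : b ∈ K := by
  induction h with
  | refl => exact ha
  | tail _ hadj ih => obtain ⟨e, he, hab⟩ := hadj; exact hK e he _ _ hab ih

end Reach

section Parity

lemma sum_degOn [Fintype G.V] (F : Set G.E) : ∑ v, G.degOn F v = 2 * F.ncard := by
  classical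
  have := Fintype.ofFinite G.E
  have hdeg : ∀ v, G.degOn F v = ∑ e ∈ F.toFinset, if v ∈ G.ends e then 1 else 0 := by
    intro v
    rw [degOn, ← Finset.card_filter, ← Set.ncard_coe_finset]
    congr 1
    ext e
    simp
  have hends : ∀ e, ∑ v, (if v ∈ G.ends e then 1 else 0) = 2 := by
    intro e
    rw [← Sym2.card_toFinset_of_not_isDiag _ (G.noLoop e), ← Finset.card_filter]
    congr 1
    ext v
    simp
  simp_rw [hdeg]
  rw [Finset.sum_comm, Finset.sum_congr rfl fun e _ => hends e, Finset.sum_const,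
    smul_eq_mul, mul_comm, Set.ncard_eq_toFinset_card']

/-- The handshake lemma for the edges of `F` meeting `K`. -/
lemma exists_odd_degOn_ne {F : Set G.E} {K : Set G.V}
    (hK : ∀ e ∈ F, ∀ a b, G.ends e = s(a, b) → a ∈ K → b ∈ K) {x : G.V} (hxK : x ∈ K)
    (hx : Odd (G.degOn F x)) : ∃ y ∈ K, y ≠ x ∧ Odd (G.degOn F y) := by
  have := Fintype.ofFinite G.V
  by_contra! hcon
  set F' := {e | e ∈ F ∧ ∃ v ∈ G.ends e, v ∈ K}
  have hdeg : ∀ v, G.degOn F' v = if v ∈ K then G.degOn F v else 0 := by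
    intro v
    split_ifs with hv
    · simp only [degOn, F', Set.mem_ofPred_eq]
      congr 1
      ext e
      exact ⟨fun h => ⟨h.1.1, h.2⟩, fun h => ⟨⟨h.1, v, h.2, hv⟩, h.2⟩⟩
    · refine degOn_eq_zero_iff.mpr fun e ⟨he, w, hw, hwK⟩ hve => hv ?_
      obtain ⟨a, b, hab⟩ := exists_ends_eq e
      rw [hab, Sym2.mem_iff] at hw hve
      have hba : G.ends e = s(b, a) := hab.trans Sym2.eq_swap
      rcases hw with rfl | rfl <;> rcases hve with rfl | rfl
      exacts [hwK, hK e he _ _ hab hwK, hK e he _ _ hba hwK, hwK]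
  have hsum := sum_degOn F'
  rw [← Finset.add_sum_erase _ _ (Finset.mem_univ x), hdeg x, if_pos hxK] at hsum
  have hrest : Even (∑ v ∈ Finset.univ.erase x, G.degOn F' v) := by
    refine Finset.even_sum _ fun v hv => ?_
    rw [hdeg v]
    split_ifs with hvK
    · exact Nat.not_odd_iff_even.mp (hcon v hvK (Finset.ne_of_mem_erase hv))
    · exact .zero
  exact Nat.not_even_iff_odd.mpr hx ((Nat.even_add.mp (hsum ▸ even_two_mul _)).mpr hrest)

lemma reachOn_of_odd {F : Set G.E} {x y : G.V} (hx : Odd (G.degOn F x))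
    (hodd : ∀ z, Odd (G.degOn F z) → z = x ∨ z = y) : G.ReachOn F x y := by
  obtain ⟨z, hz, hzx, hzodd⟩ := exists_odd_degOn_ne (K := {z | G.ReachOn F x z})
    (fun e he _ _ hab ha => ha.tail ⟨e, he, hab⟩) Relation.ReflTransGen.refl hx
  obtain rfl | rfl := hodd z hzodd
  exacts [absurd rfl hzx, hz]

lemma even_degOn_of_forall_ne {F : Set G.E} {x : G.V}
    (h : ∀ v, v ≠ x → Even (G.degOn F v)) : Even (G.degOn F x) := by
  by_contra hx
  obtain ⟨y, -, hyx, hy⟩ := exists_odd_degOn_ne (K := Set.univ) (fun _ _ _ _ _ _ => trivial)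
    trivial (Nat.not_even_iff_odd.mp hx)
  exact Nat.not_even_iff_odd.mpr hy (h y hyx)

lemma odd_degOn_of_forall_ne {F : Set G.E} {x y : G.V} (hx : Odd (G.degOn F x))
    (h : ∀ v, v ≠ x → v ≠ y → Even (G.degOn F v)) : Odd (G.degOn F y) := by
  obtain ⟨z, -, hzx, hz⟩ := exists_odd_degOn_ne (K := Set.univ) (fun _ _ _ _ _ _ => trivial)
    trivial hx
  by_cases hzy : z = y
  · exact hzy ▸ hz
  · exact absurd (h z hzx hzy) (Nat.not_even_iff_odd.mpr hz)

end Parity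

section Cycle

lemma degOn_eq_degOn_diff_add {F : Set G.E} {e : G.E} (he : e ∈ F) (v : G.V) :
    G.degOn F v = G.degOn (F \ {e}) v + if v ∈ G.ends e then 1 else 0 := by
  rw [← degOn_insert (fun h => h.2 rfl), Set.insert_sdiff_singleton, Set.insert_eq_of_mem he]

lemma IsCycle.degOn_eq_two {C : Set G.E} (hC : G.IsCycle C) {e : G.E} {v : G.V} (he : e ∈ C)
    (hv : v ∈ G.ends e) : G.degOn C v = 2 :=
  (hC.2.1 v).resolve_left fun h => degOn_eq_zero_iff.mp h e he hv

lemma reachOn_diff_singleton_of_even {F : Set G.E} (heven : ∀ v, Even (G.degOn F v))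
    {e : G.E} {a b : G.V} (he : e ∈ F) (hab : G.ends e = s(a, b)) :
    G.ReachOn (F \ {e}) a b := by
  have hdeg := fun v => degOn_eq_degOn_diff_add he v
  refine reachOn_of_odd ?_ fun z hz => ?_
  · have := hdeg a
    rw [if_pos (hab ▸ Sym2.mem_mk_left a b)] at this
    obtain ⟨k, hk⟩ := heven a
    exact ⟨k - 1, by omega⟩
  · by_contra hzab
    have hze : z ∉ G.ends e := by rw [hab, Sym2.mem_iff]; exact hzab
    have := hdeg z
    rw [if_neg hze, add_zero] at this
    exact Nat.not_even_iff_odd.mpr hz (this ▸ heven z)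

lemma IsCycle.even_degOn {C : Set G.E} (hC : G.IsCycle C) (v : G.V) : Even (G.degOn C v) := by
  rcases hC.2.1 v with h | h <;> rw [h] <;> decide

lemma IsCycle.eq_empty_or_eq_empty {C A B : Set G.E} (hC : G.IsCycle C) (hAB : A ∪ B = C)
    (hsep : ∀ e ∈ A, ∀ f ∈ B, ∀ v ∈ G.ends e, v ∉ G.ends f) : A = ∅ ∨ B = ∅ := by
  by_contra! h
  obtain ⟨⟨e, he⟩, ⟨f, hf⟩⟩ := h
  obtain ⟨a, a', hea⟩ := exists_ends_eq e
  obtain ⟨b, b', hfb⟩ := exists_ends_eq f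
  have hK : ∀ x ∈ C, ∀ p q, G.ends x = s(p, q) → p ∈ G.VertexSetOf A → q ∈ G.VertexSetOf A := by
    rintro x hx p q hpq ⟨y, hy, hpy⟩
    have hxA : x ∈ A := by
      rcases hAB ▸ hx with hxA | hxB
      · exact hxA
      · exact absurd (hpq ▸ Sym2.mem_mk_left p q) (hsep y hy x hxB p hpy)
    exact ⟨x, hxA, hpq ▸ Sym2.mem_mk_right p q⟩
  have hreach := hC.2.2 e (hAB ▸ Or.inl he) f (hAB ▸ Or.inr hf) a b
    (hea ▸ Sym2.mem_mk_left a a') (hfb ▸ Sym2.mem_mk_left b b')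
  obtain ⟨y, hy, hby⟩ := hreach.mem_of_closed hK ⟨e, he, hea ▸ Sym2.mem_mk_left a a'⟩
  exact hsep y hy f hf b hby (hfb ▸ Sym2.mem_mk_left b b')

end Cycle

section Walk

inductive IsWalkOn (G : MGraph) (F : Set G.E) : List G.V → List G.E → Prop
  | nil (v : G.V) : IsWalkOn G F [v] []
  | cons {a b : G.V} {vs : List G.V} {es : List G.E} {e : G.E} (he : e ∈ F)
      (hab : G.ends e = s(a, b)) (h : IsWalkOn G F (b :: vs) es) :
      IsWalkOn G F (a :: b :: vs) (e :: es)

variable {F : Set G.E} {vs : List G.V} {es : List G.E}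

lemma IsWalkOn.mem {e : G.E} (h : G.IsWalkOn F vs es) (he : e ∈ es) : e ∈ F := by
  induction h with
  | nil => simp at he
  | cons hF _ _ ih => rcases List.mem_cons.mp he with rfl | he; exacts [hF, ih he]

lemma IsWalkOn.mem_of_mem_ends {e : G.E} {v : G.V} (h : G.IsWalkOn F vs es) (he : e ∈ es)
    (hv : v ∈ G.ends e) : v ∈ vs := by
  induction h with
  | nil => simp at he
  | cons _ hab _ ih =>
    rcases List.mem_cons.mp he with rfl | he
    · rw [hab, Sym2.mem_iff] at hv
      rcases hv with rfl | rfl <;> simp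
    · exact List.mem_cons_of_mem _ (ih he)

lemma IsWalkOn.reachOn {a v : G.V} (h : G.IsWalkOn F vs es) (ha : vs.head? = some a)
    (hv : v ∈ vs) : G.ReachOn {e | e ∈ es} a v := by
  induction h generalizing a with
  | nil w =>
    obtain rfl : w = a := by simpa using ha
    obtain rfl : v = w := by simpa using hv
    exact .refl
  | @cons a' b vs es e _ hab _ ih =>
    obtain rfl : a' = a := by simpa using ha
    rcases List.mem_cons.mp hv with rfl | hv
    · exact .refl
    · exact (ReachOn.of_ends_eq List.mem_cons_self hab).trans
        ((ih rfl hv).mono fun x hx => List.mem_cons_of_mem _ hx)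

lemma IsWalkOn.nodup_edges (h : G.IsWalkOn F vs es) (hvs : vs.Nodup) : es.Nodup := by
  induction h with
  | nil => exact List.nodup_nil
  | cons _ hab h ih =>
    rw [List.nodup_cons] at hvs
    exact List.nodup_cons.mpr
      ⟨fun he => hvs.1 (h.mem_of_mem_ends he (hab ▸ Sym2.mem_mk_left _ _)), ih hvs.2⟩

/-- Each visit of `v` in the interior of a walk uses two of its edges, each end one. -/
lemma IsWalkOn.two_mul_count (h : G.IsWalkOn F vs es) (hes : es.Nodup) (v : G.V) :
    2 * vs.count v = G.degOn {e | e ∈ es} v + (if vs.head? = some v then 1 else 0)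
      + (if vs.getLast? = some v then 1 else 0) := by
  induction h with
  | nil w => by_cases hw : w = v <;> simp [hw, degOn]
  | @cons a b vs es e _ hab _ ih =>
    rw [List.nodup_cons] at hes
    have hins : {x | x ∈ e :: es} = insert e {x | x ∈ es} := by ext; simp
    have ih := ih hes.2
    rw [hins, degOn_insert hes.1, ite_mem_ends hab, List.getLast?_cons_cons, List.count_cons]
    simp only [List.head?_cons, Option.some.injEq, beq_iff_eq, @eq_comm _ a v, @eq_comm _ b v]
      at ih ⊢
    split_ifs at ih ⊢ <;> omega

lemma IsWalkOn.exists_suffix {v : G.V} (h : G.IsWalkOn F vs es) (hv : v ∈ vs) :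
    ∃ vs' es', G.IsWalkOn F (v :: vs') es' ∧ (v :: vs').Sublist vs ∧
      (v :: vs').getLast? = vs.getLast? := by
  induction h with
  | nil w =>
    obtain rfl : v = w := by simpa using hv
    exact ⟨[], [], .nil v, .refl _, rfl⟩
  | @cons a b vs es e he hab h ih =>
    rcases List.mem_cons.mp hv with rfl | hv
    · exact ⟨b :: vs, e :: es, .cons he hab h, .refl _, rfl⟩
    · obtain ⟨vs', es', h', hsub, hlast⟩ := ih hv
      exact ⟨vs', es', h', hsub.cons a, hlast.trans List.getLast?_cons_cons.symm⟩

lemma exists_isWalkOn_of_reachOn {a b : G.V} (h : G.ReachOn F a b) :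
    ∃ vs es, G.IsWalkOn F vs es ∧ vs.Nodup ∧ vs.head? = some a ∧ vs.getLast? = some b := by
  induction h using Relation.ReflTransGen.head_induction_on with
  | refl => exact ⟨[b], [], .nil b, List.nodup_singleton b, rfl, rfl⟩
  | @head a c hadj _ ih =>
    obtain ⟨e, he, hac⟩ := hadj
    obtain ⟨vs, es, hw, hnd, hc, hb⟩ := ih
    obtain ⟨t, rfl⟩ : ∃ t, vs = c :: t := by
      cases vs with
      | nil => simp at hc
      | cons x t => exact ⟨t, by simpa using hc⟩
    by_cases ha : a ∈ c :: t
    · obtain ⟨vs', es', hw', hsub, hlast⟩ := hw.exists_suffix ha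
      exact ⟨a :: vs', es', hw', hnd.sublist hsub, rfl, hlast.trans hb⟩
    · exact ⟨a :: c :: t, e :: es, .cons he hac hw, List.nodup_cons.mpr ⟨ha, hnd⟩, rfl,
        List.getLast?_cons_cons.trans hb⟩

lemma IsWalkOn.isCycle_insert {a b : G.V} {e : G.E} (h : G.IsWalkOn F vs es) (hvs : vs.Nodup)
    (ha : vs.head? = some a) (hb : vs.getLast? = some b) (hab : G.ends e = s(a, b))
    (he : e ∉ es) : G.IsCycle (insert e {x | x ∈ es}) := by
  have hamem : a ∈ vs := List.mem_of_mem_head? ha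
  have hbmem : b ∈ vs := List.mem_of_getLast? hb
  have hdeg : ∀ v, G.degOn (insert e {x | x ∈ es}) v = 2 * vs.count v := by
    intro v
    rw [h.two_mul_count (h.nodup_edges hvs), degOn_insert he, ite_mem_ends hab, ha, hb]
    simp only [Option.some.injEq, eq_comm]
    omega
  have hends : ∀ x ∈ insert e {x | x ∈ es}, ∀ v ∈ G.ends x, v ∈ vs := by
    rintro x (rfl | hx) v hv
    · rw [hab, Sym2.mem_iff] at hv
      rcases hv with rfl | rfl
      exacts [hamem, hbmem]
    · exact h.mem_of_mem_ends hx hv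
  have hreach : ∀ v ∈ vs, G.ReachOn (insert e {x | x ∈ es}) a v := fun v hv =>
    (h.reachOn ha hv).mono (Set.subset_insert _ _)
  refine ⟨⟨e, Set.mem_insert _ _⟩, fun v => ?_, fun x hx y hy p q hp hq =>
    (hreach p (hends x hx p hp)).symm.trans (hreach q (hends y hy q hq))⟩
  have := List.nodup_iff_count_le_one.mp hvs v
  rw [hdeg]
  omega

end Walk

section Decomposition

lemma exists_isCycle_of_even {F : Set G.E} (heven : ∀ v, Even (G.degOn F v)) {e : G.E}
    (he : e ∈ F) : ∃ C ⊆ F, e ∈ C ∧ G.IsCycle C := by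
  obtain ⟨a, b, hab⟩ := exists_ends_eq e
  obtain ⟨vs, es, hw, hnd, ha, hb⟩ :=
    exists_isWalkOn_of_reachOn (reachOn_diff_singleton_of_even heven he hab)
  exact ⟨insert e {x | x ∈ es}, Set.insert_subset he fun x hx => (hw.mem hx).1,
    Set.mem_insert _ _, hw.isCycle_insert hnd ha hb hab fun hx => (hw.mem hx).2 rfl⟩

lemma isCycleDecompOn_iff {F : Set G.E} {D : Set (Set G.E)} :
    G.IsCycleDecompOn F D ↔ (∀ C ∈ D, G.IsCycle C) ∧ D.PairwiseDisjoint id ∧ ⋃₀ D = F := by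
  constructor
  · rintro ⟨hcyc, huniq⟩
    refine ⟨fun C hC => (hcyc C hC).1, fun C hC C' hC' hne => ?_, ?_⟩
    · refine Set.disjoint_left.mpr fun e he he' => hne ?_
      obtain ⟨X, -, hX⟩ := huniq e ((hcyc C hC).2 he)
      exact (hX C ⟨hC, he⟩).trans (hX C' ⟨hC', he'⟩).symm
    · refine subset_antisymm (Set.sUnion_subset fun C hC => (hcyc C hC).2) fun e he => ?_
      obtain ⟨C, hC, -⟩ := huniq e he
      exact ⟨C, hC⟩
  · rintro ⟨hcyc, hdisj, rfl⟩
    refine ⟨fun C hC => ⟨hcyc C hC, Set.subset_sUnion_of_mem hC⟩, fun e ⟨C, hC, he⟩ =>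
      ⟨C, ⟨hC, he⟩, fun C' ⟨hC', he'⟩ => ?_⟩⟩
    by_contra hne
    exact Set.disjoint_left.mp (hdisj hC' hC hne) he' he

lemma IsCycleDecompOn.insert {F C : Set G.E} {D : Set (Set G.E)} (hD : G.IsCycleDecompOn F D)
    (hC : G.IsCycle C) (hCF : Disjoint C F) :
    G.IsCycleDecompOn (C ∪ F) (insert C D) ∧ C ∉ D := by
  obtain ⟨hcyc, hdisj, rfl⟩ := isCycleDecompOn_iff.mp hD
  have hCD : ∀ C' ∈ D, Disjoint C C' := fun C' hC' =>
    hCF.mono_right (Set.subset_sUnion_of_mem hC')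
  refine ⟨isCycleDecompOn_iff.mpr
    ⟨?_, hdisj.insert fun C' hC' _ => hCD C' hC', Set.sUnion_insert _ _⟩, fun hmem => ?_⟩
  · rintro C' (rfl | hC')
    exacts [hC, hcyc C' hC']
  · obtain ⟨e, he⟩ := hC.1
    exact Set.disjoint_left.mp (hCD C hmem) he he

lemma IsCycleDecompOn.union {F F' : Set G.E} {D D' : Set (Set G.E)}
    (hD : G.IsCycleDecompOn F D) (hD' : G.IsCycleDecompOn F' D') (hF : Disjoint F F') :
    G.IsCycleDecompOn (F ∪ F') (D ∪ D') ∧ Disjoint D D' := by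
  obtain ⟨hcyc, hdisj, rfl⟩ := isCycleDecompOn_iff.mp hD
  obtain ⟨hcyc', hdisj', rfl⟩ := isCycleDecompOn_iff.mp hD'
  have hcross : ∀ C ∈ D, ∀ C' ∈ D', Disjoint C C' := fun C hC C' hC' =>
    hF.mono (Set.subset_sUnion_of_mem hC) (Set.subset_sUnion_of_mem hC')
  refine ⟨isCycleDecompOn_iff.mpr ⟨?_, ?_, Set.sUnion_union _ _⟩, ?_⟩
  · rintro C (hC | hC)
    exacts [hcyc C hC, hcyc' C hC]
  · exact Set.pairwiseDisjoint_union.mpr ⟨hdisj, hdisj', fun C hC C' hC' _ => hcross C hC C' hC'⟩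
  · refine Set.disjoint_left.mpr fun C hC hC' => ?_
    obtain ⟨e, he⟩ := (hcyc C hC).1
    exact Set.disjoint_left.mp (hcross C hC C hC') he he

lemma IsCycleDecompOn.diff_singleton {F C : Set G.E} {D : Set (Set G.E)}
    (hD : G.IsCycleDecompOn F D) (hC : C ∈ D) : G.IsCycleDecompOn (F \ C) (D \ {C}) := by
  obtain ⟨hcyc, hdisj, rfl⟩ := isCycleDecompOn_iff.mp hD
  refine isCycleDecompOn_iff.mpr ⟨fun C' hC' => hcyc C' hC'.1, hdisj.subset Set.sdiff_subset, ?_⟩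
  ext e
  constructor
  · rintro ⟨C', ⟨hC', hne⟩, he⟩
    exact ⟨⟨C', hC', he⟩, Set.disjoint_left.mp (hdisj hC' hC hne) he⟩
  · rintro ⟨⟨C', hC', he⟩, heC⟩
    exact ⟨C', ⟨hC', fun h => heC (h ▸ he)⟩, he⟩

lemma IsCycleDecompOn.sep {F K : Set G.E} {D : Set (Set G.E)} (hD : G.IsCycleDecompOn F D)
    (hK : ∀ C ∈ D, C ⊆ K ∨ Disjoint C K) :
    G.IsCycleDecompOn (F ∩ K) {C ∈ D | C ⊆ K} := by
  obtain ⟨hcyc, hdisj, rfl⟩ := isCycleDecompOn_iff.mp hD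
  refine isCycleDecompOn_iff.mpr ⟨fun C hC => hcyc C hC.1, hdisj.subset fun _ h => h.1, ?_⟩
  ext e
  constructor
  · rintro ⟨C, ⟨hC, hCK⟩, he⟩
    exact ⟨⟨C, hC, he⟩, hCK he⟩
  · rintro ⟨⟨C, hC, he⟩, heK⟩
    exact ⟨C, ⟨hC, (hK C hC).resolve_right fun h => Set.disjoint_left.mp h he heK⟩, he⟩

lemma exists_isCycleDecompOn {F : Set G.E} (heven : ∀ v, Even (G.degOn F v)) :
    ∃ D, G.IsCycleDecompOn F D := by
  induction h : F.ncard using Nat.strong_induction_on generalizing F with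
  | _ n ih =>
    rcases F.eq_empty_or_nonempty with rfl | ⟨e, he⟩
    · exact ⟨∅, isCycleDecompOn_iff.mpr ⟨by simp, Set.pairwiseDisjoint_empty, Set.sUnion_empty⟩⟩
    obtain ⟨C, hCF, heC, hC⟩ := exists_isCycle_of_even heven he
    have hsplit : ∀ v, G.degOn F v = G.degOn C v + G.degOn (F \ C) v := fun v => by
      rw [← degOn_union Set.disjoint_sdiff_right, Set.union_sdiff_cancel hCF]
    have hlt : (F \ C).ncard < n :=
      h ▸ Set.ncard_lt_ncard (Set.sdiff_ssubset_left_iff.mpr ⟨e, he, heC⟩)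
    obtain ⟨D, hD⟩ := ih _ hlt (fun v => (Nat.even_add.mp (hsplit v ▸ heven v)).mp
      (hC.even_degOn v)) rfl
    exact ⟨_, Set.union_sdiff_cancel hCF ▸ (hD.insert hC Set.disjoint_sdiff_right).1⟩

lemma isWalkOn_univ_of_getElem? : ∀ (es : List G.E) (vs : List G.V),
    vs.length = es.length + 1 →
    (∀ (i : ℕ) (e : G.E) (a b : G.V), es[i]? = some e → vs[i]? = some a →
      vs[i + 1]? = some b → G.ends e = s(a, b)) → G.IsWalkOn Set.univ vs es
  | [], [v], _, _ => .nil v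
  | e :: es, a :: b :: vs, hlen, h =>
    .cons trivial (h 0 e a b rfl rfl rfl) (isWalkOn_univ_of_getElem? es (b :: vs)
      (by simpa using hlen) fun i => h (i + 1))

lemma IsEulerian.even_degOn (h : G.IsEulerian) (v : G.V) : Even (G.degOn Set.univ v) := by
  obtain ⟨vs, es, hlen, hends, hclosed, hnd, hall⟩ := h
  have hcount := (isWalkOn_univ_of_getElem? es vs hlen hends).two_mul_count hnd v
  rw [show {e | e ∈ es} = Set.univ from Set.eq_univ_of_forall hall, hclosed] at hcount
  split_ifs at hcount
  · exact ⟨vs.count v - 1, by omega⟩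
  · exact ⟨vs.count v, by omega⟩

lemma IsEulerian.exists_isCycleDecomp (h : G.IsEulerian) : ∃ D, G.IsCycleDecomp D :=
  exists_isCycleDecompOn h.even_degOn

def cycleDecompSizes (G : MGraph) : Set ℕ := {n | ∃ D, G.IsCycleDecomp D ∧ D.ncard = n}

lemma c_eq_sInf (G : MGraph) : G.c = sInf G.cycleDecompSizes := rfl

lemma nu_eq_sSup (G : MGraph) : G.nu = sSup G.cycleDecompSizes := rfl

lemma IsEulerian.cycleDecompSizes_nonempty {G : MGraph} (h : G.IsEulerian) :
    G.cycleDecompSizes.Nonempty :=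
  let ⟨D, hD⟩ := h.exists_isCycleDecomp
  ⟨D.ncard, D, hD, rfl⟩

lemma bddAbove_cycleDecompSizes (G : MGraph) : BddAbove G.cycleDecompSizes :=
  ⟨Nat.card (Set G.E), fun _ ⟨D, _, hD⟩ => hD ▸ Set.ncard_le_card D⟩

end Decomposition

structure Embedding (G H : MGraph) where
  onV : G.V → H.V
  onE : G.E → H.E
  onV_injective : Function.Injective onV
  onE_injective : Function.Injective onE
  ends_onE : ∀ e, H.ends (onE e) = (G.ends e).map onV

namespace Embedding

variable {H : MGraph} (φ : G.Embedding H)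

lemma mem_ends_onE {e : G.E} {x : H.V} :
    x ∈ H.ends (φ.onE e) ↔ ∃ v ∈ G.ends e, φ.onV v = x := by
  rw [φ.ends_onE, Sym2.mem_map]

lemma onV_mem_ends_onE {e : G.E} {v : G.V} : φ.onV v ∈ H.ends (φ.onE e) ↔ v ∈ G.ends e :=
  φ.mem_ends_onE.trans ⟨fun ⟨_, hw, hwv⟩ => φ.onV_injective hwv ▸ hw, fun h => ⟨v, h, rfl⟩⟩

lemma degOn_image_onV (F : Set G.E) (v : G.V) :
    H.degOn (φ.onE '' F) (φ.onV v) = G.degOn F v := by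
  rw [degOn, degOn, ← Set.ncard_image_of_injective _ φ.onE_injective]
  congr 1
  ext x
  simp only [Set.mem_image, Set.mem_ofPred_eq]
  constructor
  · rintro ⟨⟨e, he, rfl⟩, hv⟩
    exact ⟨e, ⟨he, φ.onV_mem_ends_onE.mp hv⟩, rfl⟩
  · rintro ⟨e, ⟨he, hv⟩, rfl⟩
    exact ⟨⟨e, he, rfl⟩, φ.onV_mem_ends_onE.mpr hv⟩

lemma degOn_image_of_notMem_range (F : Set G.E) {x : H.V} (hx : x ∉ Set.range φ.onV) :
    H.degOn (φ.onE '' F) x = 0 := by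
  refine degOn_eq_zero_iff.mpr ?_
  rintro _ ⟨e, -, rfl⟩ hxe
  obtain ⟨v, -, rfl⟩ := φ.mem_ends_onE.mp hxe
  exact hx ⟨v, rfl⟩

lemma reachOn_image {F : Set G.E} {a b : G.V} (h : G.ReachOn F a b) :
    H.ReachOn (φ.onE '' F) (φ.onV a) (φ.onV b) :=
  h.map φ.onV fun e he p q hpq =>
    ReachOn.of_ends_eq (Set.mem_image_of_mem _ he) (by rw [φ.ends_onE, hpq, Sym2.map_mk])

lemma exists_of_ends_onE_eq {e : G.E} {p q : H.V} (h : H.ends (φ.onE e) = s(p, q)) :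
    ∃ a b, G.ends e = s(a, b) ∧ p = φ.onV a ∧ q = φ.onV b := by
  obtain ⟨a, b, hab⟩ := exists_ends_eq e
  rw [φ.ends_onE, hab, Sym2.map_mk, Sym2.eq_iff] at h
  rcases h with ⟨rfl, rfl⟩ | ⟨rfl, rfl⟩
  exacts [⟨a, b, hab, rfl, rfl⟩, ⟨b, a, hab.trans Sym2.eq_swap, rfl, rfl⟩]

lemma reachOn_preimage {C : Set H.E} (hC : C ⊆ Set.range φ.onE) {a b : G.V}
    (h : H.ReachOn C (φ.onV a) (φ.onV b)) : G.ReachOn (φ.onE ⁻¹' C) a b := by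
  have : Nonempty G.V := ⟨a⟩
  have hinv := Function.leftInverse_invFun φ.onV_injective
  rw [← hinv a, ← hinv b]
  refine h.map (Function.invFun φ.onV) fun x hx p q hpq => ?_
  obtain ⟨e, rfl⟩ := hC hx
  obtain ⟨p, q, he, rfl, rfl⟩ := φ.exists_of_ends_onE_eq hpq
  rw [hinv, hinv]
  exact .of_ends_eq hx he

lemma isCycle_image_iff {C : Set G.E} : H.IsCycle (φ.onE '' C) ↔ G.IsCycle C := by
  constructor
  · rintro ⟨hne, hdeg, hreach⟩
    refine ⟨Set.image_nonempty.mp hne, fun v => φ.degOn_image_onV C v ▸ hdeg (φ.onV v),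
      fun e he f hf a b ha hb => ?_⟩
    have := hreach _ ⟨e, he, rfl⟩ _ ⟨f, hf, rfl⟩ _ _ (φ.onV_mem_ends_onE.mpr ha)
      (φ.onV_mem_ends_onE.mpr hb)
    simpa [Set.preimage_image_eq C φ.onE_injective] using
      φ.reachOn_preimage (Set.image_subset_range _ _) this
  · rintro ⟨hne, hdeg, hreach⟩
    refine ⟨hne.image _, fun x => ?_, ?_⟩
    · by_cases hx : x ∈ Set.range φ.onV
      · obtain ⟨v, rfl⟩ := hx
        rw [φ.degOn_image_onV]
        exact hdeg v
      · exact Or.inl (φ.degOn_image_of_notMem_range C hx)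
    · rintro _ ⟨e, he, rfl⟩ _ ⟨f, hf, rfl⟩ x y hx hy
      obtain ⟨a, ha, rfl⟩ := φ.mem_ends_onE.mp hx
      obtain ⟨b, hb, rfl⟩ := φ.mem_ends_onE.mp hy
      exact φ.reachOn_image (hreach e he f hf a b ha hb)

lemma isCycle_preimage_iff {C : Set H.E} (hC : C ⊆ Set.range φ.onE) :
    G.IsCycle (φ.onE ⁻¹' C) ↔ H.IsCycle C := by
  rw [← φ.isCycle_image_iff, Set.image_preimage_eq_of_subset hC]

lemma isCycleDecompOn_image {F : Set G.E} {D : Set (Set G.E)} (hD : G.IsCycleDecompOn F D) :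
    H.IsCycleDecompOn (φ.onE '' F) (Set.image φ.onE '' D) := by
  obtain ⟨hcyc, hdisj, rfl⟩ := isCycleDecompOn_iff.mp hD
  refine isCycleDecompOn_iff.mpr ⟨?_, ?_, Set.image_sUnion.symm⟩
  · rintro _ ⟨C, hC, rfl⟩
    exact φ.isCycle_image_iff.mpr (hcyc C hC)
  · rintro _ ⟨C, hC, rfl⟩ _ ⟨C', hC', rfl⟩ hne
    exact (Set.disjoint_image_iff φ.onE_injective).mpr
      (hdisj hC hC' fun h => hne (congrArg _ h))

lemma isCycleDecompOn_preimage {F : Set H.E} {D : Set (Set H.E)} (hD : H.IsCycleDecompOn F D)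
    (hF : F ⊆ Set.range φ.onE) :
    G.IsCycleDecompOn (φ.onE ⁻¹' F) (Set.preimage φ.onE '' D) := by
  obtain ⟨hcyc, hdisj, rfl⟩ := isCycleDecompOn_iff.mp hD
  refine isCycleDecompOn_iff.mpr ⟨?_, ?_, by rw [Set.preimage_sUnion, Set.sUnion_image]⟩
  · rintro _ ⟨C, hC, rfl⟩
    exact (φ.isCycle_preimage_iff ((Set.subset_sUnion_of_mem hC).trans hF)).mpr (hcyc C hC)
  · rintro _ ⟨C, hC, rfl⟩ _ ⟨C', hC', rfl⟩ hne
    exact (hdisj hC hC' fun h => hne (congrArg _ h)).preimage _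

lemma ncard_image_image (D : Set (Set G.E)) : (Set.image φ.onE '' D).ncard = D.ncard :=
  Set.ncard_image_of_injective _ (Set.image_injective.mpr φ.onE_injective)

lemma ncard_preimage_image {F : Set H.E} {D : Set (Set H.E)} (hD : H.IsCycleDecompOn F D)
    (hF : F ⊆ Set.range φ.onE) : (Set.preimage φ.onE '' D).ncard = D.ncard := by
  refine Set.InjOn.ncard_image fun C hC C' hC' h => ?_
  have hsub : ∀ X ∈ D, X ⊆ Set.range φ.onE := fun X hX => (hD.1 X hX).2.trans hF
  rw [← Set.image_preimage_eq_of_subset (hsub C hC),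
    ← Set.image_preimage_eq_of_subset (hsub C' hC')]
  exact congrArg _ h

end Embedding

/-- A reducible copy of `deleteEdge`, so that `rw` and `simp` see `(G.eraseEdge e).V` as `G.V`. -/
abbrev eraseEdge (G : MGraph) (e : G.E) : MGraph where
  V := G.V
  E := {f : G.E // f ≠ e}
  finV := G.finV
  finE := by have := G.finE; infer_instance
  ends f := G.ends f.1
  noLoop f := G.noLoop f.1

def eraseEdgeEmbedding (G : MGraph) (e : G.E) : (G.eraseEdge e).Embedding G where
  onV := id
  onE := Subtype.val
  onV_injective := Function.injective_id
  onE_injective := Subtype.val_injective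
  ends_onE f := by simp

lemma degOn_eq_degOn_eraseEdge_add {C : Set G.E} {e : G.E} (he : e ∈ C) (v : G.V) :
    G.degOn C v = (G.eraseEdge e).degOn (Subtype.val ⁻¹' C) v + if v ∈ G.ends e then 1 else 0 := by
  rw [degOn_eq_degOn_diff_add he]
  congr 1
  refine Eq.trans ?_ ((G.eraseEdgeEmbedding e).degOn_image_onV (Subtype.val ⁻¹' C) v)
  congr 1
  ext x
  constructor
  · rintro ⟨hx, hne⟩
    exact ⟨⟨x, hne⟩, hx, rfl⟩
  · rintro ⟨y, hy, rfl⟩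
    exact ⟨hy, y.2⟩

namespace Embedding

variable {H : MGraph} {e : G.E} (φ : (G.eraseEdge e).Embedding H)

lemma reachOn_onV_of_reachOn {u v : G.V} (huv : G.ends e = s(u, v)) {C : Set G.E}
    {T : Set H.E} (hT : φ.onE '' (Subtype.val ⁻¹' C) ⊆ T)
    (hdetour : e ∈ C → H.ReachOn T (φ.onV u) (φ.onV v)) {a b : G.V} (h : G.ReachOn C a b) :
    H.ReachOn T (φ.onV a) (φ.onV b) := by
  refine ReachOn.map (G := G) φ.onV (fun f hf p q hpq => ?_) h
  by_cases hfe : f = e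
  · have he : e ∈ C := hfe ▸ hf
    rw [hfe, huv, Sym2.eq_iff] at hpq
    rcases hpq with ⟨rfl, rfl⟩ | ⟨rfl, rfl⟩
    exacts [hdetour he, (hdetour he).symm]
  · exact .of_ends_eq (hT ⟨⟨f, hfe⟩, hf, rfl⟩) (by rw [φ.ends_onE]; simp [hpq])

lemma exists_isCycleDecompOn_image_compl {C : Set G.E} {D : Set (Set G.E)}
    (hD : G.IsCycleDecomp D) (hC : C ∈ D) (heC : e ∈ C) :
    ∃ D', H.IsCycleDecompOn (φ.onE '' (Subtype.val ⁻¹' (Set.univ \ C))) D' ∧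
      D'.ncard + 1 = D.ncard := by
  have hsub : Set.univ \ C ⊆ Set.range (G.eraseEdgeEmbedding e).onE :=
    fun f hf => ⟨⟨f, fun h => hf.2 (by rw [h]; exact heC)⟩, rfl⟩
  refine ⟨_, φ.isCycleDecompOn_image ((G.eraseEdgeEmbedding e).isCycleDecompOn_preimage
    (hD.diff_singleton hC) hsub), ?_⟩
  rw [ncard_image_image, ncard_preimage_image _ (hD.diff_singleton hC) hsub,
    Set.ncard_sdiff_singleton_add_one hC]

lemma exists_isCycleDecomp_insert {C : Set H.E} {D : Set (Set H.E)}
    (hD : H.IsCycleDecompOn ((Set.univ \ C) ∩ Set.range φ.onE) D)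
    (hC : G.IsCycle (insert e (Subtype.val '' (φ.onE ⁻¹' C)))) :
    ∃ D', G.IsCycleDecomp D' ∧ D'.ncard = D.ncard + 1 := by
  have hdisj : Disjoint (insert e (Subtype.val '' (φ.onE ⁻¹' C)))
      ((G.eraseEdgeEmbedding e).onE '' (φ.onE ⁻¹' ((Set.univ \ C) ∩ Set.range φ.onE))) := by
    refine Set.disjoint_left.mpr ?_
    rintro x (rfl | ⟨f, hf, rfl⟩) ⟨g, hg, hgx⟩
    · exact g.2 hgx
    · exact hg.1.2 (Subtype.ext hgx ▸ hf)
  have huniv : insert e (Subtype.val '' (φ.onE ⁻¹' C)) ∪ (G.eraseEdgeEmbedding e).onE ''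
      (φ.onE ⁻¹' ((Set.univ \ C) ∩ Set.range φ.onE)) = Set.univ := by
    refine Set.eq_univ_of_forall fun f => ?_
    by_cases hfe : f = e
    · exact Or.inl (by rw [hfe]; exact Set.mem_insert _ _)
    by_cases hf : φ.onE ⟨f, hfe⟩ ∈ C
    · exact Or.inl (Set.mem_insert_of_mem _ ⟨⟨f, hfe⟩, hf, rfl⟩)
    · exact Or.inr ⟨⟨f, hfe⟩, ⟨⟨trivial, hf⟩, ⟨f, hfe⟩, rfl⟩, rfl⟩
  obtain ⟨hD', hCD⟩ := ((G.eraseEdgeEmbedding e).isCycleDecompOn_image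
    (φ.isCycleDecompOn_preimage hD Set.inter_subset_right)).insert hC hdisj
  refine ⟨_, huniv ▸ hD', ?_⟩
  rw [Set.ncard_insert_of_notMem hCD, ncard_image_image,
    ncard_preimage_image _ hD Set.inter_subset_right]

end Embedding

end MGraph

structure VertexEdgeGluing where
  G1 : MGraph
  G2 : MGraph
  e1 : G1.E
  e2 : G2.E
  u1 : G1.V
  v1 : G1.V
  u2 : G2.V
  v2 : G2.V
  h1 : G1.ends e1 = s(u1, v1)
  h2 : G2.ends e2 = s(u2, v2)

namespace VertexEdgeGluing

open MGraph

variable (S : VertexEdgeGluing)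

noncomputable abbrev graph : MGraph :=
  vertexEdgeIdent S.G1 S.G2 S.e1 S.e2 S.u1 S.v1 S.u2 S.v2 S.h2

noncomputable def newEdge : S.graph.E := Sum.inr (Sum.inr ())

noncomputable def left : (S.G1.eraseEdge S.e1).Embedding S.graph where
  onV (a : S.G1.V) := Sum.inl a
  onE := Sum.inl
  onV_injective := Sum.inl_injective
  onE_injective := Sum.inl_injective
  ends_onE _ := rfl

noncomputable def rightV (w : S.G2.V) : S.G1.V ⊕ {w : S.G2.V // w ≠ S.v2} :=
  if h : w = S.v2 then .inl S.v1 else .inr ⟨w, h⟩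

lemma rightV_injective : Function.Injective S.rightV := by
  intro w w' h
  by_cases hw : w = S.v2 <;> by_cases hw' : w' = S.v2 <;> simp_all [rightV]

noncomputable def right : (S.G2.eraseEdge S.e2).Embedding S.graph where
  onV := S.rightV
  onE f := Sum.inr (Sum.inl f)
  onV_injective := S.rightV_injective
  onE_injective _ _ h := Sum.inl_injective (Sum.inr_injective h)
  ends_onE _ := rfl

lemma u1_ne_v1 : S.u1 ≠ S.v1 := ne_of_ends_eq S.h1

lemma u2_ne_v2 : S.u2 ≠ S.v2 := ne_of_ends_eq S.h2

lemma right_onV_v2 : S.right.onV S.v2 = S.left.onV S.v1 := dif_pos rfl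

lemma right_onV_of_ne {w : S.G2.V} (hw : w ≠ S.v2) :
    S.right.onV w = (Sum.inr ⟨w, hw⟩ : S.graph.V) :=
  dif_neg hw

lemma left_onV_eq_right_onV_iff {a : S.G1.V} {w : S.G2.V} :
    S.left.onV a = S.right.onV w ↔ a = S.v1 ∧ w = S.v2 := by
  constructor
  · intro h
    by_cases hw : w = S.v2
    · rw [hw, right_onV_v2] at h
      exact ⟨S.left.onV_injective h, hw⟩
    · rw [right_onV_of_ne S hw] at h
      exact absurd h Sum.inl_ne_inr
  · rintro ⟨rfl, rfl⟩
    exact S.right_onV_v2.symm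

lemma ends_newEdge : S.graph.ends S.newEdge = s(S.left.onV S.u1, S.right.onV S.u2) := by
  rw [right_onV_of_ne S S.u2_ne_v2]
  rfl

lemma mem_ends_newEdge_left {a : S.G1.V} : S.left.onV a ∈ S.graph.ends S.newEdge ↔ a = S.u1 := by
  rw [ends_newEdge, Sym2.mem_iff, S.left.onV_injective.eq_iff, left_onV_eq_right_onV_iff]
  exact ⟨fun h => h.resolve_right fun h' => S.u2_ne_v2 h'.2, Or.inl⟩

lemma mem_ends_newEdge_right {w : S.G2.V} :
    S.right.onV w ∈ S.graph.ends S.newEdge ↔ w = S.u2 := by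
  rw [ends_newEdge, Sym2.mem_iff, S.right.onV_injective.eq_iff, eq_comm,
    left_onV_eq_right_onV_iff]
  exact ⟨fun h => h.resolve_left fun h' => S.u1_ne_v1 h'.1, Or.inr⟩

lemma range_left_union_range_right_union_newEdge :
    Set.range S.left.onE ∪ Set.range S.right.onE ∪ {S.newEdge} = Set.univ := by
  refine Set.eq_univ_of_forall fun x => ?_
  rcases x with f | f | ⟨⟩
  exacts [Or.inl (Or.inl ⟨f, rfl⟩), Or.inl (Or.inr ⟨f, rfl⟩), Or.inr rfl]

lemma disjoint_range_left_right : Disjoint (Set.range S.left.onE) (Set.range S.right.onE) :=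
  Set.disjoint_left.mpr fun _ ⟨_, hf⟩ ⟨_, hg⟩ => Sum.inl_ne_inr (hf.trans hg.symm)

lemma newEdge_notMem_range_left : S.newEdge ∉ Set.range S.left.onE :=
  fun ⟨_, h⟩ => Sum.inl_ne_inr h

lemma newEdge_notMem_range_right : S.newEdge ∉ Set.range S.right.onE :=
  fun ⟨_, h⟩ => Sum.inl_ne_inr (Sum.inr_injective h)

lemma degOn_eq_left_add_right_add (C : Set S.graph.E) (X : S.graph.V) :
    S.graph.degOn C X = S.graph.degOn (S.left.onE '' (S.left.onE ⁻¹' C)) X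
      + S.graph.degOn (S.right.onE '' (S.right.onE ⁻¹' C)) X
      + if S.newEdge ∈ C ∧ X ∈ S.graph.ends S.newEdge then 1 else 0 := by
  have hC : C = (C ∩ Set.range S.left.onE ∪ C ∩ Set.range S.right.onE) ∪ C ∩ {S.newEdge} := by
    rw [← Set.inter_union_distrib_left, ← Set.inter_union_distrib_left,
      range_left_union_range_right_union_newEdge, Set.inter_univ]
  have hnew : S.graph.degOn (C ∩ {S.newEdge}) X
      = if S.newEdge ∈ C ∧ X ∈ S.graph.ends S.newEdge then 1 else 0 := by
    by_cases hn : S.newEdge ∈ C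
    · rw [Set.inter_singleton_of_mem hn, degOn_singleton]
      simp [hn]
    · rw [Set.inter_singleton_eq_empty.mpr hn, if_neg fun h => hn h.1]
      exact degOn_eq_zero_iff.mpr fun _ h => h.elim
  have hLR : Disjoint (C ∩ Set.range S.left.onE) (C ∩ Set.range S.right.onE) :=
    S.disjoint_range_left_right.mono Set.inter_subset_right Set.inter_subset_right
  have hLRN : Disjoint (C ∩ Set.range S.left.onE ∪ C ∩ Set.range S.right.onE)
      (C ∩ {S.newEdge}) :=
    Set.disjoint_union_left.mpr
      ⟨(Set.disjoint_singleton_right.mpr S.newEdge_notMem_range_left).mono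
        Set.inter_subset_right Set.inter_subset_right,
      (Set.disjoint_singleton_right.mpr S.newEdge_notMem_range_right).mono
        Set.inter_subset_right Set.inter_subset_right⟩
  rw [Set.image_preimage_eq_inter_range, Set.image_preimage_eq_inter_range, ← hnew,
    ← degOn_union hLR, ← degOn_union hLRN, ← hC]

lemma degOn_left_onV (C : Set S.graph.E) {a : S.G1.V} (ha : a ≠ S.v1) :
    S.graph.degOn C (S.left.onV a) = (S.G1.eraseEdge S.e1).degOn (S.left.onE ⁻¹' C) a
      + if S.newEdge ∈ C ∧ a = S.u1 then 1 else 0 := by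
  rw [degOn_eq_left_add_right_add, S.left.degOn_image_onV, S.right.degOn_image_of_notMem_range, add_zero]
  · simp only [mem_ends_newEdge_left]
  rintro ⟨w, hw⟩
  exact ha (S.left_onV_eq_right_onV_iff.mp hw.symm).1

lemma degOn_right_onV (C : Set S.graph.E) {w : S.G2.V} (hw : w ≠ S.v2) :
    S.graph.degOn C (S.right.onV w) = (S.G2.eraseEdge S.e2).degOn (S.right.onE ⁻¹' C) w
      + if S.newEdge ∈ C ∧ w = S.u2 then 1 else 0 := by
  rw [degOn_eq_left_add_right_add, S.right.degOn_image_onV, S.left.degOn_image_of_notMem_range, zero_add]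
  · simp only [mem_ends_newEdge_right]
  rintro ⟨a, ha⟩
  exact hw (S.left_onV_eq_right_onV_iff.mp ha).2

lemma degOn_left_onV_v1 (C : Set S.graph.E) :
    S.graph.degOn C (S.left.onV S.v1) = (S.G1.eraseEdge S.e1).degOn (S.left.onE ⁻¹' C) S.v1
      + (S.G2.eraseEdge S.e2).degOn (S.right.onE ⁻¹' C) S.v2 := by
  have hR := S.right.degOn_image_onV (S.right.onE ⁻¹' C) S.v2
  rw [S.right_onV_v2] at hR
  rw [degOn_eq_left_add_right_add, S.left.degOn_image_onV, hR]
  simp only [mem_ends_newEdge_left, S.u1_ne_v1.symm, and_false, if_false, add_zero]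

noncomputable def merge (C1 : Set S.G1.E) (C2 : Set S.G2.E) : Set S.graph.E :=
  insert S.newEdge (S.left.onE '' (Subtype.val ⁻¹' C1) ∪ S.right.onE '' (Subtype.val ⁻¹' C2))

lemma newEdge_mem_merge (C1 : Set S.G1.E) (C2 : Set S.G2.E) : S.newEdge ∈ S.merge C1 C2 :=
  Set.mem_insert _ _

lemma left_preimage_merge (C1 : Set S.G1.E) (C2 : Set S.G2.E) :
    S.left.onE ⁻¹' S.merge C1 C2 = Subtype.val ⁻¹' C1 := by
  ext f
  simp only [merge, Set.mem_preimage, Set.mem_insert_iff, Set.mem_union,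
    S.left.onE_injective.mem_set_image]
  refine ⟨fun h => ?_, fun h => Or.inr (Or.inl h)⟩
  rcases h with h | h | ⟨g, -, h⟩
  · exact absurd ⟨f, h⟩ S.newEdge_notMem_range_left
  · exact h
  · exact (Set.disjoint_left.mp S.disjoint_range_left_right ⟨f, h.symm⟩ ⟨g, rfl⟩).elim

lemma right_preimage_merge (C1 : Set S.G1.E) (C2 : Set S.G2.E) :
    S.right.onE ⁻¹' S.merge C1 C2 = Subtype.val ⁻¹' C2 := by
  ext f
  simp only [merge, Set.mem_preimage, Set.mem_insert_iff, Set.mem_union,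
    S.right.onE_injective.mem_set_image]
  refine ⟨fun h => ?_, fun h => Or.inr (Or.inr h)⟩
  rcases h with h | ⟨g, -, h⟩ | h
  · exact absurd ⟨f, h⟩ S.newEdge_notMem_range_right
  · exact (Set.disjoint_left.mp S.disjoint_range_left_right ⟨g, h⟩ ⟨f, rfl⟩).elim
  · exact h

lemma disjoint_merge (C1 : Set S.G1.E) (C2 : Set S.G2.E) :
    Disjoint (S.merge C1 C2) (S.left.onE '' (Subtype.val ⁻¹' (Set.univ \ C1))
      ∪ S.right.onE '' (Subtype.val ⁻¹' (Set.univ \ C2))) := by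
  refine Set.disjoint_left.mpr ?_
  rintro x (rfl | ⟨f, hf, rfl⟩ | ⟨f, hf, rfl⟩) (⟨g, hg, hgx⟩ | ⟨g, hg, hgx⟩)
  · exact S.newEdge_notMem_range_left ⟨g, hgx⟩
  · exact S.newEdge_notMem_range_right ⟨g, hgx⟩
  · exact hg.2 (S.left.onE_injective hgx ▸ hf)
  · exact Set.disjoint_left.mp S.disjoint_range_left_right ⟨f, rfl⟩ ⟨g, hgx⟩
  · exact Set.disjoint_left.mp S.disjoint_range_left_right ⟨g, hgx⟩ ⟨f, rfl⟩
  · exact hg.2 (S.right.onE_injective hgx ▸ hf)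

lemma merge_union_eq_univ (C1 : Set S.G1.E) (C2 : Set S.G2.E) :
    S.merge C1 C2 ∪ (S.left.onE '' (Subtype.val ⁻¹' (Set.univ \ C1))
      ∪ S.right.onE '' (Subtype.val ⁻¹' (Set.univ \ C2))) = Set.univ := by
  refine Set.eq_univ_of_forall fun x => ?_
  rcases x with f | f | ⟨⟩
  · by_cases hf : f.1 ∈ C1
    · exact Or.inl (Set.mem_insert_of_mem _ (Or.inl ⟨f, hf, rfl⟩))
    · exact Or.inr (Or.inl ⟨f, ⟨trivial, hf⟩, rfl⟩)
  · by_cases hf : f.1 ∈ C2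
    · exact Or.inl (Set.mem_insert_of_mem _ (Or.inr ⟨f, hf, rfl⟩))
    · exact Or.inr (Or.inr ⟨f, ⟨trivial, hf⟩, rfl⟩)
  · exact Or.inl (Set.mem_insert _ _)

lemma degOn_merge {C1 : Set S.G1.E} {C2 : Set S.G2.E} (hC1 : S.G1.IsCycle C1) (he1 : S.e1 ∈ C1)
    (hC2 : S.G2.IsCycle C2) (he2 : S.e2 ∈ C2) (X : S.graph.V) :
    S.graph.degOn (S.merge C1 C2) X = 0 ∨ S.graph.degOn (S.merge C1 C2) X = 2 := by
  have hd1 := degOn_eq_degOn_eraseEdge_add he1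
  have hd2 := degOn_eq_degOn_eraseEdge_add he2
  rcases X with a | ⟨w, hw⟩
  · change S.graph.degOn _ (S.left.onV a) = 0 ∨ S.graph.degOn _ (S.left.onV a) = 2
    by_cases ha : a = S.v1
    · have hv1 : S.v1 ∈ S.G1.ends S.e1 := S.h1 ▸ Sym2.mem_mk_right _ _
      have hv2 : S.v2 ∈ S.G2.ends S.e2 := S.h2 ▸ Sym2.mem_mk_right _ _
      have h1 := hd1 S.v1
      have h2 := hd2 S.v2
      rw [hC1.degOn_eq_two he1 hv1, if_pos hv1] at h1
      rw [hC2.degOn_eq_two he2 hv2, if_pos hv2] at h2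
      rw [ha, degOn_left_onV_v1, left_preimage_merge, right_preimage_merge]
      omega
    · rw [degOn_left_onV _ _ ha, left_preimage_merge]
      simp only [S.newEdge_mem_merge, true_and]
      rw [← ite_mem_ends_of_ne S.h1 ha, ← hd1 a]
      exact hC1.2.1 a
  · rw [← S.right_onV_of_ne hw, degOn_right_onV _ _ hw, right_preimage_merge]
    simp only [S.newEdge_mem_merge, true_and]
    rw [← ite_mem_ends_of_ne S.h2 hw, ← hd2 w]
    exact hC2.2.1 w

lemma reachOn_merge_left_onV_u1 {C1 : Set S.G1.E} {C2 : Set S.G2.E} (hC1 : S.G1.IsCycle C1)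
    (he1 : S.e1 ∈ C1) (hC2 : S.G2.IsCycle C2) (he2 : S.e2 ∈ C2) {x : S.graph.E}
    (hx : x ∈ S.merge C1 C2) {X : S.graph.V} (hX : X ∈ S.graph.ends x) :
    S.graph.ReachOn (S.merge C1 C2) X (S.left.onV S.u1) := by
  have hL : S.left.onE '' (Subtype.val ⁻¹' C1) ⊆ S.merge C1 C2 :=
    fun _ hx => Set.mem_insert_of_mem _ (Or.inl hx)
  have hR : S.right.onE '' (Subtype.val ⁻¹' C2) ⊆ S.merge C1 C2 :=
    fun _ hx => Set.mem_insert_of_mem _ (Or.inr hx)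
  have hpath1 := S.left.reachOn_onV_of_reachOn S.h1 (C := C1 \ {S.e1})
    ((Set.image_mono (Set.preimage_mono Set.sdiff_subset)).trans hL) (fun h => (h.2 rfl).elim)
    (reachOn_diff_singleton_of_even hC1.even_degOn he1 S.h1)
  have hpath2 := S.right.reachOn_onV_of_reachOn S.h2 (C := C2 \ {S.e2})
    ((Set.image_mono (Set.preimage_mono Set.sdiff_subset)).trans hR) (fun h => (h.2 rfl).elim)
    (reachOn_diff_singleton_of_even hC2.even_degOn he2 S.h2)
  have hnew : S.graph.ReachOn (S.merge C1 C2) (S.left.onV S.u1) (S.right.onV S.u2) :=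
    .of_ends_eq (S.newEdge_mem_merge C1 C2) S.ends_newEdge
  rcases hx with rfl | ⟨f, hf, rfl⟩ | ⟨f, hf, rfl⟩
  · rw [S.ends_newEdge, Sym2.mem_iff] at hX
    rcases hX with rfl | rfl
    exacts [.refl, hnew.symm]
  · obtain ⟨p, hp, rfl⟩ := S.left.mem_ends_onE.mp hX
    exact S.left.reachOn_onV_of_reachOn S.h1 hL (fun _ => hpath1)
      (hC1.2.2 _ hf _ he1 _ _ hp (S.h1 ▸ Sym2.mem_mk_left _ _))
  · obtain ⟨p, hp, rfl⟩ := S.right.mem_ends_onE.mp hX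
    exact (S.right.reachOn_onV_of_reachOn S.h2 hR (fun _ => hpath2)
      (hC2.2.2 _ hf _ he2 _ _ hp (S.h2 ▸ Sym2.mem_mk_left _ _))).trans hnew.symm

lemma isCycle_merge {C1 : Set S.G1.E} {C2 : Set S.G2.E} (hC1 : S.G1.IsCycle C1) (he1 : S.e1 ∈ C1)
    (hC2 : S.G2.IsCycle C2) (he2 : S.e2 ∈ C2) : S.graph.IsCycle (S.merge C1 C2) :=
  ⟨⟨_, S.newEdge_mem_merge C1 C2⟩, S.degOn_merge hC1 he1 hC2 he2, fun _ hx _ hy _ _ hX hY =>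
    (S.reachOn_merge_left_onV_u1 hC1 he1 hC2 he2 hx hX).trans
      (S.reachOn_merge_left_onV_u1 hC1 he1 hC2 he2 hy hY).symm⟩

noncomputable def toG1 : S.graph.V → S.G1.V := Sum.elim id fun _ => S.v1

noncomputable def toG2 : S.graph.V → S.G2.V := Sum.elim (fun _ => S.v2) Subtype.val

lemma toG1_left_onV (a : S.G1.V) : S.toG1 (S.left.onV a) = a := rfl

lemma toG1_right_onV (w : S.G2.V) : S.toG1 (S.right.onV w) = S.v1 := by
  by_cases hw : w = S.v2
  · rw [hw, right_onV_v2]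
    rfl
  · rw [right_onV_of_ne S hw]
    rfl

lemma toG2_left_onV (a : S.G1.V) : S.toG2 (S.left.onV a) = S.v2 := rfl

lemma toG2_right_onV (w : S.G2.V) : S.toG2 (S.right.onV w) = w := by
  by_cases hw : w = S.v2
  · rw [hw, right_onV_v2]
    rfl
  · rw [right_onV_of_ne S hw]
    rfl

noncomputable def split1 (C : Set S.graph.E) : Set S.G1.E :=
  insert S.e1 (Subtype.val '' (S.left.onE ⁻¹' C))

noncomputable def split2 (C : Set S.graph.E) : Set S.G2.E :=
  insert S.e2 (Subtype.val '' (S.right.onE ⁻¹' C))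

lemma val_preimage_split1 (C : Set S.graph.E) :
    Subtype.val ⁻¹' S.split1 C = S.left.onE ⁻¹' C := by
  ext f
  simp [split1, f.2]

lemma val_preimage_split2 (C : Set S.graph.E) :
    Subtype.val ⁻¹' S.split2 C = S.right.onE ⁻¹' C := by
  ext f
  simp [split2, f.2]

lemma reachOn_split1 {C : Set S.graph.E} {X Y : S.graph.V} (h : S.graph.ReachOn C X Y) :
    S.G1.ReachOn (S.split1 C) (S.toG1 X) (S.toG1 Y) := by
  refine h.map S.toG1 fun x hx p q hpq => ?_
  rcases x with f | f | ⟨⟩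
  · obtain ⟨a, b, hab, rfl, rfl⟩ := S.left.exists_of_ends_onE_eq hpq
    exact .of_ends_eq (Set.mem_insert_of_mem _ ⟨f, hx, rfl⟩) hab
  · obtain ⟨a, b, -, rfl, rfl⟩ := S.right.exists_of_ends_onE_eq hpq
    rw [toG1_right_onV, toG1_right_onV]
    exact .refl
  · rw [show Sum.inr (Sum.inr ()) = S.newEdge from rfl, ends_newEdge, Sym2.eq_iff] at hpq
    rcases hpq with ⟨rfl, rfl⟩ | ⟨rfl, rfl⟩
    · rw [toG1_left_onV, toG1_right_onV]
      exact .of_ends_eq (Set.mem_insert _ _) S.h1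
    · rw [toG1_left_onV, toG1_right_onV]
      exact .of_ends_eq (Set.mem_insert _ _) (S.h1.trans Sym2.eq_swap)

lemma reachOn_split2 {C : Set S.graph.E} {X Y : S.graph.V} (h : S.graph.ReachOn C X Y) :
    S.G2.ReachOn (S.split2 C) (S.toG2 X) (S.toG2 Y) := by
  refine h.map S.toG2 fun x hx p q hpq => ?_
  rcases x with f | f | ⟨⟩
  · obtain ⟨a, b, -, rfl, rfl⟩ := S.left.exists_of_ends_onE_eq hpq
    rw [toG2_left_onV, toG2_left_onV]
    exact .refl
  · obtain ⟨a, b, hab, rfl, rfl⟩ := S.right.exists_of_ends_onE_eq hpq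
    rw [toG2_right_onV, toG2_right_onV]
    exact .of_ends_eq (Set.mem_insert_of_mem _ ⟨f, hx, rfl⟩) hab
  · rw [show Sum.inr (Sum.inr ()) = S.newEdge from rfl, ends_newEdge, Sym2.eq_iff] at hpq
    rcases hpq with ⟨rfl, rfl⟩ | ⟨rfl, rfl⟩
    · rw [toG2_left_onV, toG2_right_onV]
      exact .of_ends_eq (Set.mem_insert _ _) (S.h2.trans Sym2.eq_swap)
    · rw [toG2_left_onV, toG2_right_onV]
      exact .of_ends_eq (Set.mem_insert _ _) S.h2

/-- Parity: on the `G1` side the only other vertex of odd degree is `u1`, on the `G2` side `u2`. -/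
lemma degOn_preimage_cut {C : Set S.graph.E} (hC : S.graph.IsCycle C) (hn : S.newEdge ∈ C) :
    (S.G1.eraseEdge S.e1).degOn (S.left.onE ⁻¹' C) S.v1 = 1 ∧
      (S.G2.eraseEdge S.e2).degOn (S.right.onE ⁻¹' C) S.v2 = 1 := by
  have hL := fun a (ha : a ≠ S.v1) => S.degOn_left_onV C ha
  have hR := fun w (hw : w ≠ S.v2) => S.degOn_right_onV C hw
  simp only [hn, true_and] at hL hR
  have hu1 := hL S.u1 S.u1_ne_v1
  have hu2 := hR S.u2 S.u2_ne_v2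
  rw [hC.degOn_eq_two hn (S.mem_ends_newEdge_left.mpr rfl), if_pos rfl] at hu1
  rw [hC.degOn_eq_two hn (S.mem_ends_newEdge_right.mpr rfl), if_pos rfl] at hu2
  have hoddL : Odd ((S.G1.eraseEdge S.e1).degOn (S.left.onE ⁻¹' C) S.v1) :=
    odd_degOn_of_forall_ne (G := S.G1.eraseEdge S.e1) (x := S.u1) ⟨0, by omega⟩ fun a hau hav => by
      have := hL a hav
      rw [if_neg hau, add_zero] at this
      exact this ▸ hC.even_degOn _
  have hoddR : Odd ((S.G2.eraseEdge S.e2).degOn (S.right.onE ⁻¹' C) S.v2) :=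
    odd_degOn_of_forall_ne (G := S.G2.eraseEdge S.e2) (x := S.u2) ⟨0, by omega⟩ fun w hwu hwv => by
      have := hR w hwv
      rw [if_neg hwu, add_zero] at this
      exact this ▸ hC.even_degOn _
  have hsum := S.degOn_left_onV_v1 C
  obtain ⟨k, hk⟩ := hoddL
  obtain ⟨l, hl⟩ := hoddR
  rcases hC.2.1 (S.left.onV S.v1) with h | h <;> omega

lemma isCycle_split1 {C : Set S.graph.E} (hC : S.graph.IsCycle C) (hn : S.newEdge ∈ C) :
    S.G1.IsCycle (S.split1 C) := by
  refine ⟨⟨S.e1, Set.mem_insert _ _⟩, fun a => ?_, ?_⟩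
  · rw [degOn_eq_degOn_eraseEdge_add (C := S.split1 C) (Set.mem_insert _ _), val_preimage_split1]
    by_cases ha : a = S.v1
    · rw [ha, (S.degOn_preimage_cut hC hn).1, if_pos (S.h1 ▸ Sym2.mem_mk_right _ _)]
      exact Or.inr rfl
    · have := S.degOn_left_onV C ha
      simp only [hn, true_and] at this
      rw [ite_mem_ends_of_ne S.h1 ha, ← this]
      exact hC.2.1 _
  · have hlift : ∀ e ∈ S.split1 C, ∀ a ∈ S.G1.ends e,
        ∃ x ∈ C, ∃ X ∈ S.graph.ends x, S.toG1 X = a := by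
      rintro e (rfl | ⟨f, hf, rfl⟩) a ha
      · rw [S.h1, Sym2.mem_iff] at ha
        rcases ha with rfl | rfl
        · exact ⟨_, hn, _, S.mem_ends_newEdge_left.mpr rfl, S.toG1_left_onV _⟩
        · exact ⟨_, hn, _, S.mem_ends_newEdge_right.mpr rfl, S.toG1_right_onV _⟩
      · exact ⟨_, hf, _, S.left.onV_mem_ends_onE.mpr ha, S.toG1_left_onV _⟩
    intro e he f hf a b ha hb
    obtain ⟨x, hx, X, hX, rfl⟩ := hlift e he a ha
    obtain ⟨y, hy, Y, hY, rfl⟩ := hlift f hf b hb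
    exact S.reachOn_split1 (hC.2.2 x hx y hy X Y hX hY)

lemma isCycle_split2 {C : Set S.graph.E} (hC : S.graph.IsCycle C) (hn : S.newEdge ∈ C) :
    S.G2.IsCycle (S.split2 C) := by
  refine ⟨⟨S.e2, Set.mem_insert _ _⟩, fun w => ?_, ?_⟩
  · rw [degOn_eq_degOn_eraseEdge_add (C := S.split2 C) (Set.mem_insert _ _), val_preimage_split2]
    by_cases hw : w = S.v2
    · rw [hw, (S.degOn_preimage_cut hC hn).2, if_pos (S.h2 ▸ Sym2.mem_mk_right _ _)]
      exact Or.inr rfl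
    · have := S.degOn_right_onV C hw
      simp only [hn, true_and] at this
      rw [ite_mem_ends_of_ne S.h2 hw, ← this]
      exact hC.2.1 _
  · have hlift : ∀ e ∈ S.split2 C, ∀ w ∈ S.G2.ends e,
        ∃ x ∈ C, ∃ X ∈ S.graph.ends x, S.toG2 X = w := by
      rintro e (rfl | ⟨f, hf, rfl⟩) w hw
      · rw [S.h2, Sym2.mem_iff] at hw
        rcases hw with rfl | rfl
        · exact ⟨_, hn, _, S.mem_ends_newEdge_right.mpr rfl, S.toG2_right_onV _⟩
        · exact ⟨_, hn, _, S.mem_ends_newEdge_left.mpr rfl, S.toG2_left_onV _⟩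
      · exact ⟨_, hf, _, S.right.onV_mem_ends_onE.mpr hw, S.toG2_right_onV _⟩
    intro e he f hf a b ha hb
    obtain ⟨x, hx, X, hX, rfl⟩ := hlift e he a ha
    obtain ⟨y, hy, Y, hY, rfl⟩ := hlift f hf b hb
    exact S.reachOn_split2 (hC.2.2 x hx y hy X Y hX hY)

/-- Avoiding the new edge, a cycle has even degree at `v1 = v2` on each side, hence degree
zero on one of them; so its two sides share no vertex, and one is empty. -/
lemma subset_range_left_or_right {C : Set S.graph.E} (hC : S.graph.IsCycle C)
    (hn : S.newEdge ∉ C) : C ⊆ Set.range S.left.onE ∨ C ⊆ Set.range S.right.onE := by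
  have hL := fun a (ha : a ≠ S.v1) => S.degOn_left_onV C ha
  have hR := fun w (hw : w ≠ S.v2) => S.degOn_right_onV C hw
  simp only [hn, false_and, if_false, add_zero] at hL hR
  have hevenL := even_degOn_of_forall_ne (G := S.G1.eraseEdge S.e1) fun a ha =>
    hL a ha ▸ hC.even_degOn _
  have hevenR := even_degOn_of_forall_ne (G := S.G2.eraseEdge S.e2) fun w hw =>
    hR w hw ▸ hC.even_degOn _
  have hsum := S.degOn_left_onV_v1 C
  have hzero : (S.G1.eraseEdge S.e1).degOn (S.left.onE ⁻¹' C) S.v1 = 0 ∨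
      (S.G2.eraseEdge S.e2).degOn (S.right.onE ⁻¹' C) S.v2 = 0 := by
    obtain ⟨k, hk⟩ := hevenL
    obtain ⟨l, hl⟩ := hevenR
    rcases hC.2.1 (S.left.onV S.v1) with h | h <;> omega
  have hunion : C ∩ Set.range S.left.onE ∪ C ∩ Set.range S.right.onE = C := by
    rw [← Set.inter_union_distrib_left, Set.inter_eq_left]
    intro x hx
    have := S.range_left_union_range_right_union_newEdge ▸ Set.mem_univ x
    exact this.resolve_right fun h => hn (h ▸ hx)
  have hsep : ∀ e ∈ C ∩ Set.range S.left.onE, ∀ f ∈ C ∩ Set.range S.right.onE,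
      ∀ v ∈ S.graph.ends e, v ∉ S.graph.ends f := by
    rintro _ ⟨he, e, rfl⟩ _ ⟨hf, f, rfl⟩ v hv hv'
    obtain ⟨a, ha, rfl⟩ := S.left.mem_ends_onE.mp hv
    obtain ⟨w, hw, hwa⟩ := S.right.mem_ends_onE.mp hv'
    obtain ⟨rfl, rfl⟩ := S.left_onV_eq_right_onV_iff.mp hwa.symm
    rcases hzero with h | h
    exacts [degOn_eq_zero_iff.mp h e he ha, degOn_eq_zero_iff.mp h f hf hw]
  rcases hC.eq_empty_or_eq_empty hunion hsep with h | h
  · exact Or.inr fun x hx => ((hunion ▸ hx).resolve_left fun hx' => h.subset hx').2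
  · exact Or.inl fun x hx => ((hunion ▸ hx).resolve_right fun hx' => h.subset hx').2

lemma exists_isCycleDecomp_graph_of_sides {D1 : Set (Set S.G1.E)} {D2 : Set (Set S.G2.E)}
    (hD1 : S.G1.IsCycleDecomp D1) (hD2 : S.G2.IsCycleDecomp D2) :
    ∃ D, S.graph.IsCycleDecomp D ∧ D.ncard + 1 = D1.ncard + D2.ncard := by
  obtain ⟨C1, ⟨hC1D, he1⟩, -⟩ := hD1.2 S.e1 trivial
  obtain ⟨C2, ⟨hC2D, he2⟩, -⟩ := hD2.2 S.e2 trivial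
  obtain ⟨D1', hD1', hcard1⟩ := S.left.exists_isCycleDecompOn_image_compl hD1 hC1D he1
  obtain ⟨D2', hD2', hcard2⟩ := S.right.exists_isCycleDecompOn_image_compl hD2 hC2D he2
  obtain ⟨hD', hD12⟩ := hD1'.union hD2'
    (S.disjoint_range_left_right.mono (Set.image_subset_range _ _) (Set.image_subset_range _ _))
  obtain ⟨hD, hM⟩ := hD'.insert (S.isCycle_merge (hD1.1 C1 hC1D).1 he1 (hD2.1 C2 hC2D).1 he2)
    (S.disjoint_merge C1 C2)
  refine ⟨_, S.merge_union_eq_univ C1 C2 ▸ hD, ?_⟩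
  rw [Set.ncard_insert_of_notMem hM, Set.ncard_union_eq hD12, ← hcard1, ← hcard2]
  ring

lemma exists_isCycleDecomp_sides_of_graph {D : Set (Set S.graph.E)}
    (hD : S.graph.IsCycleDecomp D) :
    ∃ D1 D2, S.G1.IsCycleDecomp D1 ∧ S.G2.IsCycleDecomp D2 ∧
      D.ncard + 1 = D1.ncard + D2.ncard := by
  obtain ⟨Ce, ⟨hCeD, hne⟩, huniq⟩ := hD.2 S.newEdge trivial
  have hCe := (hD.1 Ce hCeD).1
  have hD' := hD.diff_singleton hCeD
  have hside : ∀ C ∈ D \ {Ce}, C ⊆ Set.range S.left.onE ∨ C ⊆ Set.range S.right.onE :=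
    fun C hC => S.subset_range_left_or_right (hD.1 C hC.1).1 fun h => hC.2 (huniq C ⟨hC.1, h⟩)
  obtain ⟨D1, hD1, hcard1⟩ := S.left.exists_isCycleDecomp_insert
    (hD'.sep fun C hC => (hside C hC).imp_right fun h =>
      S.disjoint_range_left_right.symm.mono_left h) (S.isCycle_split1 hCe hne)
  obtain ⟨D2, hD2, hcard2⟩ := S.right.exists_isCycleDecomp_insert
    (hD'.sep fun C hC => (hside C hC).symm.imp_right fun h =>
      S.disjoint_range_left_right.mono_left h) (S.isCycle_split2 hCe hne)
  refine ⟨D1, D2, hD1, hD2, ?_⟩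
  have hLR : D \ {Ce} = {C ∈ D \ {Ce} | C ⊆ Set.range S.left.onE}
      ∪ {C ∈ D \ {Ce} | C ⊆ Set.range S.right.onE} := by
    ext C
    exact ⟨fun hC => (hside C hC).imp (⟨hC, ·⟩) (⟨hC, ·⟩), fun h => h.elim (·.1) (·.1)⟩
  have hdisj : Disjoint {C ∈ D \ {Ce} | C ⊆ Set.range S.left.onE}
      {C ∈ D \ {Ce} | C ⊆ Set.range S.right.onE} := by
    refine Set.disjoint_left.mpr fun C hCL hCR => ?_
    obtain ⟨e, he⟩ := (hD.1 C hCL.1.1).1.1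
    exact Set.disjoint_left.mp S.disjoint_range_left_right (hCL.2 he) (hCR.2 he)
  have hcard := Set.ncard_union_eq hdisj
  rw [← hLR] at hcard
  rw [hcard1, hcard2, ← Set.ncard_sdiff_singleton_add_one hCeD, hcard]
  ring

open scoped Pointwise in
lemma image_cycleDecompSizes :
    (· + 1) '' S.graph.cycleDecompSizes = S.G1.cycleDecompSizes + S.G2.cycleDecompSizes := by
  ext m
  constructor
  · rintro ⟨_, ⟨D, hD, rfl⟩, rfl⟩
    obtain ⟨D1, D2, hD1, hD2, hcard⟩ := S.exists_isCycleDecomp_sides_of_graph hD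
    exact ⟨_, ⟨D1, hD1, rfl⟩, _, ⟨D2, hD2, rfl⟩, hcard.symm⟩
  · rintro ⟨_, ⟨D1, hD1, rfl⟩, _, ⟨D2, hD2, rfl⟩, rfl⟩
    obtain ⟨D, hD, hcard⟩ := S.exists_isCycleDecomp_graph_of_sides hD1 hD2
    exact ⟨_, ⟨D, hD, rfl⟩, hcard⟩

end VertexEdgeGluing

/-- cycle numbers under vertex-edge-identification. -/
theorem cycle_numbers_vertexEdgeIdent (G1 G2 : MGraph)
    (hE1 : G1.IsEulerian) (hE2 : G2.IsEulerian)
    (e1 : G1.E) (e2 : G2.E) (u1 v1 : G1.V) (u2 v2 : G2.V)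
    (h1 : G1.ends e1 = s(u1, v1)) (h2 : G2.ends e2 = s(u2, v2)) :
    ((MGraph.vertexEdgeIdent G1 G2 e1 e2 u1 v1 u2 v2 h2).c : ℤ)
        = (G1.c : ℤ) + G2.c - 1 ∧
    ((MGraph.vertexEdgeIdent G1 G2 e1 e2 u1 v1 u2 v2 h2).nu : ℤ)
        = (G1.nu : ℤ) + G2.nu - 1 := by
  obtain ⟨hc, hnu⟩ := sInf_add_one_and_sSup_add_one hE1.cycleDecompSizes_nonempty
    hE2.cycleDecompSizes_nonempty G1.bddAbove_cycleDecompSizes G2.bddAbove_cycleDecompSizes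
    (VertexEdgeGluing.mk G1 G2 e1 e2 u1 v1 u2 v2 h1 h2).image_cycleDecompSizes
  rw [← MGraph.c_eq_sInf, ← MGraph.c_eq_sInf, ← MGraph.c_eq_sInf] at hc
  rw [← MGraph.nu_eq_sSup, ← MGraph.nu_eq_sSup, ← MGraph.nu_eq_sSup] at hnu
  dsimp only [VertexEdgeGluing.graph] at hc hnu
  exact ⟨by omega, by omega⟩
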